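/- Let p > 3 be a prime and let g(p) denote the ratio of the number of nonzero (v₁,v₂) ∈ 𝔽_p² with F(v₁,v₂,0,0) = 0 to the number of nonzero (v₁,v₂,v₃,v₄) ∈ 𝔽_p⁴ with F(v₁,v₂,v₃,v₄) = 0. Then g(p) = 1/(p+1)² if p ≡ 1 (mod 4), and g(p) = 1/(p²+1) if p ≡ 3 (mod 4). -/

import Mathlib

/-!
Over a field with `q` elements and `2 ≠ 0`, in the coordinates `s = v₀ - v₁`, `d = v₂ - v₃`,
`a = 2 (v₀ + v₁)`, `c = v₂ + v₃` the Descartes form becomes `s² + d² - a c`. For fixed `(s, d)`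
the equation `a c = t` has `q - 1` solutions, plus `q` more when `t = 0`, so the form has
`q² (q - 1) + q Z` zeros, where `Z` counts the zeros of `s² + d²`. If `i² = -1` this plane is
hyperbolic, `s² + d² = (s + i d) (s - i d)`, and `Z = 2q - 1`; otherwise only `(0, 0)` is
isotropic and `Z = 1`. For `𝔽_p`, `-1` is a square iff `p ≢ 3 mod 4`. On the other side,
`F(v₀, v₁, 0, 0) = (v₀ - v₁)²` has the `q - 1` nonzero diagonal vectors as isotropic vectors.
-/

/-- The Descartes quadratic form over a commutative ring. -/
def descartesForm {R : Type*} [CommRing R] (v : Fin 4 → R) : R :=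
  2 * (∑ i, v i ^ 2) - (∑ i, v i) ^ 2

open Finset

theorem card_filter_ne_zero_and {α : Type*} [Fintype α] [DecidableEq α] [Zero α] {P : α → Prop}
    [DecidablePred P] (h : P 0) : #{a | a ≠ 0 ∧ P a} = #{a | P a} - 1 := by
  rw [← card_erase_of_mem (mem_filter.2 ⟨mem_univ _, h⟩), ← filter_ne', filter_filter]
  simp only [and_comm]

section CommRing

variable {R : Type*} [CommRing R]

theorem descartesForm_eq_sq_add_sq_sub (v : Fin 4 → R) :
    descartesForm v = (v 0 - v 1) ^ 2 + (v 2 - v 3) ^ 2 - 2 * (v 0 + v 1) * (v 2 + v 3) := by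
  simp only [descartesForm, Fin.sum_univ_four]
  ring

theorem descartesForm_cons_cons_zero_zero (a b : R) :
    descartesForm ![a, b, 0, 0] = (a - b) ^ 2 := by
  simp only [descartesForm, Fin.sum_univ_four, Matrix.cons_val_zero, Matrix.cons_val_one,
    Matrix.cons_val]
  ring

def descartesCoords (v : Fin 4 → R) : (R × R) × (R × R) :=
  ((v 0 - v 1, v 2 - v 3), (2 * (v 0 + v 1), v 2 + v 3))

end CommRing

section Field

variable {F : Type*} [Field F]

theorem descartesCoords_bijective [Fintype F] (h2 : (2 : F) ≠ 0) :
    Function.Bijective (descartesCoords (R := F)) := by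
  refine (Fintype.bijective_iff_injective_and_card _).2 ⟨fun v w h => ?_, by simp; ring⟩
  simp only [descartesCoords, Prod.mk.injEq] at h
  obtain ⟨⟨h01, h23⟩, h01', h23'⟩ := h
  replace h01' := mul_left_cancel₀ h2 h01'
  funext i
  fin_cases i
  · exact mul_left_cancel₀ h2 (by linear_combination h01 + h01' : 2 * v 0 = 2 * w 0)
  · exact mul_left_cancel₀ h2 (by linear_combination h01' - h01 : 2 * v 1 = 2 * w 1)
  · exact mul_left_cancel₀ h2 (by linear_combination h23 + h23' : 2 * v 2 = 2 * w 2)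
  · exact mul_left_cancel₀ h2 (by linear_combination h23' - h23 : 2 * v 3 = 2 * w 3)

variable [Fintype F] [DecidableEq F]

theorem card_filter_mul_eq (t : F) :
    #{x : F × F | x.1 * x.2 = t} =
      Fintype.card F - 1 + if t = 0 then Fintype.card F else 0 := by
  have fiber (a : F) : #{c : F | a * c = t} =
      if a = 0 then (if t = 0 then Fintype.card F else 0) else 1 := by
    split_ifs with ha ht
    · simp [ha, ht]
    · simp [ha, Ne.symm ht]
    · exact card_eq_one.2 ⟨t / a, by ext c; simp [eq_div_iff ha, mul_comm]⟩
  rw [card_filter, Fintype.sum_prod_type]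
  simp only [← card_filter, fiber]
  rw [← add_sum_erase _ _ (mem_univ 0), if_pos rfl,
    sum_congr rfl fun a ha => if_neg (ne_of_mem_erase ha), sum_const,
    card_erase_of_mem (mem_univ _), card_univ, smul_eq_mul, mul_one, add_comm]

theorem card_filter_mul_eq_fiberwise {Y : Type*} [Fintype Y] (f : Y → F) :
    #{z : Y × (F × F) | z.2.1 * z.2.2 = f z.1} =
      Fintype.card Y * (Fintype.card F - 1) + #{y | f y = 0} * Fintype.card F := by
  rw [card_filter, Fintype.sum_prod_type]
  simp only [← card_filter, card_filter_mul_eq, sum_add_distrib, sum_const, card_univ,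
    smul_eq_mul]
  rw [← sum_filter, sum_const, smul_eq_mul]

theorem card_descartesForm_eq_zero (h2 : (2 : F) ≠ 0) :
    #{v : Fin 4 → F | descartesForm v = 0} =
      Fintype.card F ^ 2 * (Fintype.card F - 1) +
        #{y : F × F | y.1 ^ 2 + y.2 ^ 2 = 0} * Fintype.card F := by
  calc #{v : Fin 4 → F | descartesForm v = 0}
      = #{z : (F × F) × (F × F) | z.2.1 * z.2.2 = z.1.1 ^ 2 + z.1.2 ^ 2} :=
        card_equiv (.ofBijective _ (descartesCoords_bijective h2)) fun v => by
          simp only [mem_filter, mem_univ, true_and, Equiv.ofBijective_apply, descartesCoords,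
            descartesForm_eq_sq_add_sq_sub]
          rw [sub_eq_zero, eq_comm]
    _ = _ := by
      rw [card_filter_mul_eq_fiberwise fun y : F × F => y.1 ^ 2 + y.2 ^ 2]
      simp [sq]

theorem card_sq_add_sq_eq_zero_of_not_isSquare (h : ¬IsSquare (-1 : F)) :
    #{y : F × F | y.1 ^ 2 + y.2 ^ 2 = 0} = 1 := by
  refine card_eq_one.2 ⟨0, eq_singleton_iff_unique_mem.2 ⟨by simp, fun y hy => ?_⟩⟩
  simp only [mem_filter, mem_univ, true_and] at hy
  have hy2 : y.2 = 0 := by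
    by_contra hy2
    exact h ⟨y.1 / y.2, by field_simp; linear_combination -hy⟩
  simp_all [Prod.ext_iff]

theorem card_sq_add_sq_eq_zero_of_isSquare (h2 : (2 : F) ≠ 0) (h : IsSquare (-1 : F)) :
    #{y : F × F | y.1 ^ 2 + y.2 ^ 2 = 0} = 2 * Fintype.card F - 1 := by
  obtain ⟨i, hi⟩ := h
  have hi0 : i ≠ 0 := by rintro rfl; simp at hi
  let f : F × F → F × F := fun y => (y.1 + i * y.2, y.1 - i * y.2)
  have hf : f.Injective := fun y z h => by
    simp only [f, Prod.mk.injEq] at h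
    exact Prod.ext (mul_left_cancel₀ h2 (by linear_combination h.1 + h.2))
      (mul_left_cancel₀ (mul_ne_zero h2 hi0) (by linear_combination h.1 - h.2))
  calc #{y : F × F | y.1 ^ 2 + y.2 ^ 2 = 0}
      = #{x : F × F | x.1 * x.2 = 0} :=
        card_equiv (.ofBijective f (Finite.injective_iff_bijective.1 hf)) fun y => by
          simp only [mem_filter, mem_univ, true_and, Equiv.ofBijective_apply, f]
          constructor <;> intro hy
          · linear_combination hy + y.2 ^ 2 * hi
          · linear_combination hy - y.2 ^ 2 * hi
    _ = 2 * Fintype.card F - 1 := by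
      rw [card_filter_mul_eq, if_pos rfl]
      have := Fintype.card_pos (α := F)
      omega

theorem card_isotropic_descartesForm_of_isSquare (h2 : (2 : F) ≠ 0) (h : IsSquare (-1 : F)) :
    #{v : Fin 4 → F | v ≠ 0 ∧ descartesForm v = 0} =
      (Fintype.card F - 1) * (Fintype.card F + 1) ^ 2 := by
  rw [card_filter_ne_zero_and (by simp [descartesForm]), card_descartesForm_eq_zero h2,
    card_sq_add_sq_eq_zero_of_isSquare h2 h]
  obtain ⟨m, hm⟩ := Nat.exists_eq_add_one.2 (Fintype.card_pos (α := F))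
  rw [hm]
  grind

theorem card_isotropic_descartesForm_of_not_isSquare (h : ¬IsSquare (-1 : F)) :
    #{v : Fin 4 → F | v ≠ 0 ∧ descartesForm v = 0} =
      (Fintype.card F - 1) * (Fintype.card F ^ 2 + 1) := by
  have h2 : (2 : F) ≠ 0 := fun h2 => h ⟨1, by linear_combination -h2⟩
  rw [card_filter_ne_zero_and (by simp [descartesForm]), card_descartesForm_eq_zero h2,
    card_sq_add_sq_eq_zero_of_not_isSquare h]
  obtain ⟨m, hm⟩ := Nat.exists_eq_add_one.2 (Fintype.card_pos (α := F))
  rw [hm]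
  grind

theorem card_isotropic_descartesForm_cons_cons_zero_zero :
    #{v : Fin 2 → F | v ≠ 0 ∧ descartesForm ![v 0, v 1, 0, 0] = 0} = Fintype.card F - 1 := by
  simp only [descartesForm_cons_cons_zero_zero, sq_eq_zero_iff, sub_eq_zero]
  rw [card_filter_ne_zero_and (P := fun v : Fin 2 → F => v 0 = v 1) rfl, ← card_univ,
    ← diag_card (univ : Finset F)]
  congr 1
  exact card_equiv (finTwoArrowEquiv F) fun v => by simp [mem_diag]

end Field

theorem stmt7_general (p : ℕ) (hp : p.Prime) :
    (p % 4 = 1 →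
      (Nat.card {v : Fin 2 → ZMod p | v ≠ 0 ∧ descartesForm ![v 0, v 1, 0, 0] = 0} : ℚ) /
        (Nat.card {v : Fin 4 → ZMod p | v ≠ 0 ∧ descartesForm v = 0} : ℚ) =
        1 / ((p : ℚ) + 1) ^ 2) ∧
    (p % 4 = 3 →
      (Nat.card {v : Fin 2 → ZMod p | v ≠ 0 ∧ descartesForm ![v 0, v 1, 0, 0] = 0} : ℚ) /
        (Nat.card {v : Fin 4 → ZMod p | v ≠ 0 ∧ descartesForm v = 0} : ℚ) =
        1 / ((p : ℚ) ^ 2 + 1)) := by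
  have := Fact.mk hp
  have hp1 : ((p - 1 : ℕ) : ℚ) ≠ 0 := Nat.cast_ne_zero.2 (Nat.sub_ne_zero_of_lt hp.one_lt)
  simp only [Nat.card_eq_card_toFinset, Set.toFinset_ofPred,
    card_isotropic_descartesForm_cons_cons_zero_zero, ZMod.card]
  refine ⟨fun h1 => ?_, fun h3 => ?_⟩
  · have h2 : (2 : ZMod p) ≠ 0 := Ring.two_ne_zero (by rw [ZMod.ringChar_zmod_n]; omega)
    rw [card_isotropic_descartesForm_of_isSquare h2 (ZMod.exists_sq_eq_neg_one_iff.2 (by omega)),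
      ZMod.card, Nat.cast_mul, div_mul_cancel_left₀ hp1]
    push_cast
    ring
  · rw [card_isotropic_descartesForm_of_not_isSquare
      (fun h => ZMod.exists_sq_eq_neg_one_iff.1 h (by omega)),
      ZMod.card, Nat.cast_mul, div_mul_cancel_left₀ hp1]
    push_cast
    ring

theorem stmt7 (p : ℕ) (hp : p.Prime) (hp3 : 3 < p) :
    (p % 4 = 1 →
      (Nat.card {v : Fin 2 → ZMod p | v ≠ 0 ∧ descartesForm ![v 0, v 1, 0, 0] = 0} : ℚ) /
        (Nat.card {v : Fin 4 → ZMod p | v ≠ 0 ∧ descartesForm v = 0} : ℚ) =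
        1 / ((p : ℚ) + 1) ^ 2) ∧
    (p % 4 = 3 →
      (Nat.card {v : Fin 2 → ZMod p | v ≠ 0 ∧ descartesForm ![v 0, v 1, 0, 0] = 0} : ℚ) /
        (Nat.card {v : Fin 4 → ZMod p | v ≠ 0 ∧ descartesForm v = 0} : ℚ) =
        1 / ((p : ℚ) ^ 2 + 1)) :=
  stmt7_general p hp
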